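/- The invariance condition of the quartic invariant of the autonomous d₄P^(I) map contains the trivial factor (x − z): in the polynomial ring ℂ[a, b, c, d, X, x, y, z, u], the difference Δ₄(X, x, y, z) − Δ₄(x, y, z, u) is divisible by (x − z), i.e., there exists a polynomial Q in these variables with Δ₄(X, x, y, z) − Δ₄(x, y, z, u) = (x − z)·Q. -/
import Mathlib


open MvPolynomial

/-- The quartic invariant `Δ₄` of the autonomous `d₄P^(I)` map, as a polynomial
expression in a commutative ring, with parameters `a b c d` and arguments `x y z u`. -/
def Δ₄ {R : Type*} [CommRing R] (a b c d x y z u : R) : R :=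
  a * y * z * (-y^2 - 2*y*z - x*y - z^2 - z*u + x*u) - b * y * z * (y + z)
    - c * y * z + d * (y + z)

/-- In the polynomial ring `ℂ[a, b, c, d, X, x, y, z, u]` (with variables indexed by
`Fin 9` in this order), the difference `Δ₄(X, x, y, z) − Δ₄(x, y, z, u)` is divisible by
the trivial factor `(x − z)`. -/
theorem d4PI_Delta4_invariance_trivial_factor :
    ∃ Q : MvPolynomial (Fin 9) ℂ,
      Δ₄ (X 0) (X 1) (X 2) (X 3) (X 4) (X 5) (X 6) (X 7)
        - Δ₄ (X 0) (X 1) (X 2) (X 3) (X 5) (X 6) (X 7) (X 8)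
        = (X 5 - X 7) * Q := by
  refine ⟨X 0 * X 6 * (-(X 5)^2 - X 5 * X 7 - (X 7)^2 - 2 * X 5 * X 6 - 2 * X 6 * X 7
      - X 4 * X 5 - (X 6)^2 - X 7 * X 8) - X 1 * X 6 * (X 5 + X 6 + X 7) - X 2 * X 6 + X 3, ?_⟩
  simp only [Δ₄]
  ring
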